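/- In the graded tensor product A_q ⊗ A_q, the elements Ξ = x⊗ξ + ξ⊗x, Θ = x⊗θ + θ⊗x and Z = x⊗z + z⊗x satisfy Ξ·Z = −q⁻¹ Z·Ξ and Θ·Z = −q⁻¹ Z·Θ. Consequently, together with the relations among X = x⊗x, Ξ, Θ, Z already established, the assignment Δ(x) = x⊗x, Δ(ξ) = x⊗ξ + ξ⊗x, Δ(θ) = x⊗θ + θ⊗x, Δ(z) = x⊗z + z⊗x extends to a well-defined ℂ-algebra morphism Δ : A_q → A_q ⊗ A_q. -/

import Mathlib

/-!
STATEMENT 5: In the graded tensor product `A_q ⊗ A_q`, the elements `Ξ = x⊗ξ + ξ⊗x`,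
`Θ = x⊗θ + θ⊗x` and `Z = x⊗z + z⊗x` satisfy `Ξ·Z = −q⁻¹ Z·Ξ` and `Θ·Z = −q⁻¹ Z·Θ`.
Consequently, together with the relations among `X = x⊗x`, `Ξ`, `Θ`, `Z` already
established, the assignment `Δ(x) = x⊗x`, `Δ(ξ) = x⊗ξ + ξ⊗x`, `Δ(θ) = x⊗θ + θ⊗x`,
`Δ(z) = x⊗z + z⊗x` extends to a well-defined `ℂ`-algebra morphism `Δ : A_q → A_q ⊗ A_q`
(a unital `ℂ`-linear map which is multiplicative for the graded multiplication on
`A_q ⊗ A_q`).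
-/
open scoped TensorProduct

namespace DGQS

/-- The standard scalar product `⟨(a,b),(a',b')⟩ = aa' + bb'` on `ℤ₂ × ℤ₂`. -/
def pair2 (γ δ : ZMod 2 × ZMod 2) : ZMod 2 := γ.1 * δ.1 + γ.2 * δ.2

/-- The sign `(−1)^{⟨γ,δ⟩}`. -/
noncomputable def gsign (γ δ : ZMod 2 × ZMod 2) : ℂ := (-1 : ℂ) ^ (pair2 γ δ).val

/-- The defining relations of the double-graded quantum superplane, imposed on the free
algebra on four generators `x = ι 0`, `ξ = ι 1`, `θ = ι 2`, `z = ι 3`: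
`xξ = q ξx`, `xθ = q θx`, `xz = zx`, `ξ² = 0`, `θ² = 0`, `ξθ = θξ`,
`ξz = −q⁻¹ zξ`, `θz = −q⁻¹ zθ`. -/
inductive Rel (q : ℂ) : FreeAlgebra ℂ (Fin 4) → FreeAlgebra ℂ (Fin 4) → Prop
  | x_xi : Rel q (FreeAlgebra.ι ℂ (0 : Fin 4) * FreeAlgebra.ι ℂ (1 : Fin 4))
      (q • (FreeAlgebra.ι ℂ (1 : Fin 4) * FreeAlgebra.ι ℂ (0 : Fin 4)))
  | x_th : Rel q (FreeAlgebra.ι ℂ (0 : Fin 4) * FreeAlgebra.ι ℂ (2 : Fin 4))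
      (q • (FreeAlgebra.ι ℂ (2 : Fin 4) * FreeAlgebra.ι ℂ (0 : Fin 4)))
  | x_z : Rel q (FreeAlgebra.ι ℂ (0 : Fin 4) * FreeAlgebra.ι ℂ (3 : Fin 4))
      (FreeAlgebra.ι ℂ (3 : Fin 4) * FreeAlgebra.ι ℂ (0 : Fin 4))
  | xi_sq : Rel q (FreeAlgebra.ι ℂ (1 : Fin 4) * FreeAlgebra.ι ℂ (1 : Fin 4)) 0
  | th_sq : Rel q (FreeAlgebra.ι ℂ (2 : Fin 4) * FreeAlgebra.ι ℂ (2 : Fin 4)) 0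
  | xi_th : Rel q (FreeAlgebra.ι ℂ (1 : Fin 4) * FreeAlgebra.ι ℂ (2 : Fin 4))
      (FreeAlgebra.ι ℂ (2 : Fin 4) * FreeAlgebra.ι ℂ (1 : Fin 4))
  | xi_z : Rel q (FreeAlgebra.ι ℂ (1 : Fin 4) * FreeAlgebra.ι ℂ (3 : Fin 4))
      ((-q⁻¹) • (FreeAlgebra.ι ℂ (3 : Fin 4) * FreeAlgebra.ι ℂ (1 : Fin 4)))
  | th_z : Rel q (FreeAlgebra.ι ℂ (2 : Fin 4) * FreeAlgebra.ι ℂ (3 : Fin 4))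
      ((-q⁻¹) • (FreeAlgebra.ι ℂ (3 : Fin 4) * FreeAlgebra.ι ℂ (2 : Fin 4)))

/-- The algebra of polynomials on the double-graded quantum superplane `ℝ_q(1|𝟏)`. -/
abbrev Aq (q : ℂ) : Type := RingQuot (Rel q)

/-- The generators of `A_q`. -/
noncomputable def gen (q : ℂ) (i : Fin 4) : Aq q :=
  RingQuot.mkAlgHom ℂ (Rel q) (FreeAlgebra.ι ℂ i)

/-- The generator `x`, of degree `(0,0)`. -/
noncomputable def X (q : ℂ) : Aq q := gen q 0
/-- The generator `ξ`, of degree `(0,1)`. -/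
noncomputable def Xi (q : ℂ) : Aq q := gen q 1
/-- The generator `θ`, of degree `(1,0)`. -/
noncomputable def Th (q : ℂ) : Aq q := gen q 2
/-- The generator `z`, of degree `(1,1)`. -/
noncomputable def Zg (q : ℂ) : Aq q := gen q 3

/-- The `ℤ₂ × ℤ₂`-degrees of the generators. -/
def dg : Fin 4 → ZMod 2 × ZMod 2 := ![(0, 0), (0, 1), (1, 0), (1, 1)]

/-- The homogeneous component of degree `γ` of `A_q`: the span of the images of the
words in the generators of total degree `γ`. -/
noncomputable def grading (q : ℂ) (γ : ZMod 2 × ZMod 2) : Submodule ℂ (Aq q) :=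
  Submodule.span ℂ
    { a | ∃ w : List (Fin 4), (w.map dg).sum = γ ∧ a = (w.map (gen q)).prod }

end DGQS

/-!
The sign `(-1)^⟨γ,δ⟩` is bimultiplicative and `A_q` is spanned by homogeneous elements, so the
graded multiplication on `A_q ⊗ A_q` is associative with unit `1 ⊗ 1`; it makes `A_q ⊗ A_q` a
`ℂ`-algebra, and `Δ` is the lift of its values on the generators once these satisfy the eight
defining relations.

All eight relations come from one computation. Let `x` have degree `0` and `a`, `b` degrees
`α`, `β`, with `x a = s a x`, `x b = t b x` and `a b = c b a`. Of the four terms of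
`(x⊗a + a⊗x)(x⊗b + b⊗x)`, the outer two match those of `c (x⊗b + b⊗x)(x⊗a + a⊗x)` by
`a b = c b a`, and the two mixed ones match as soon as `t = c (-1)^⟨α,β⟩ s`. The relations
`ξ² = θ² = 0` are the case `c = -1`, read as `ξξ = -ξξ`.
-/

namespace DGQS

open TensorProduct

lemma gsign_eq_one {γ δ : ZMod 2 × ZMod 2} (h : pair2 γ δ = 0) : gsign γ δ = 1 := by
  rw [gsign, h, ZMod.val_zero, pow_zero]

lemma gsign_eq_neg_one {γ δ : ZMod 2 × ZMod 2} (h : pair2 γ δ = 1) : gsign γ δ = -1 := by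
  rw [gsign, h, ZMod.val_one, pow_one]

lemma gsign_add_left (γ δ ε : ZMod 2 × ZMod 2) : gsign (γ + δ) ε = gsign γ ε * gsign δ ε := by
  rw [gsign, gsign, gsign, ← pow_add, neg_one_pow_eq_pow_mod_two (_ + _), ← ZMod.val_add,
    pair2, pair2, pair2, Prod.fst_add, Prod.snd_add, add_mul, add_mul, add_add_add_comm]

lemma gsign_comm (γ δ : ZMod 2 × ZMod 2) : gsign γ δ = gsign δ γ := by
  rw [gsign, gsign, pair2, pair2, mul_comm γ.1, mul_comm γ.2]

lemma gsign_add_right (γ δ ε : ZMod 2 × ZMod 2) : gsign γ (δ + ε) = gsign γ δ * gsign γ ε := by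
  rw [gsign_comm, gsign_add_left, gsign_comm δ, gsign_comm ε]

lemma gsign_zero_left (δ : ZMod 2 × ZMod 2) : gsign 0 δ = 1 :=
  gsign_eq_one (by simp [pair2])

lemma gsign_zero_right (γ : ZMod 2 × ZMod 2) : gsign γ 0 = 1 := by
  rw [gsign_comm, gsign_zero_left]

lemma gsign_mul_self (γ δ : ZMod 2 × ZMod 2) : gsign γ δ * gsign γ δ = 1 := by
  rw [gsign, ← pow_add, ← two_mul, pow_mul]; norm_num

theorem _root_.TensorProduct.induction_on_homogeneous {R ι M : Type*} [CommSemiring R]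
    [AddCommMonoid M] [Module R M] {𝒜 : ι → Submodule R M} (h𝒜 : ⨆ i, 𝒜 i = ⊤)
    {P : M ⊗[R] M → Prop} (t : M ⊗[R] M) (zero : P 0)
    (tmul : ∀ {i j : ι} {a b : M}, a ∈ 𝒜 i → b ∈ 𝒜 j → P (a ⊗ₜ b))
    (add : ∀ t u, P t → P u → P (t + u)) : P t := by
  have mem_iSup (a : M) : a ∈ ⨆ i, 𝒜 i := h𝒜 ▸ Submodule.mem_top
  induction t using TensorProduct.induction_on with
  | zero => exact zero
  | add t u ht hu => exact add t u ht hu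
  | tmul a b =>
    refine Submodule.iSup_induction 𝒜 (motive := fun a => P (a ⊗ₜ b)) (mem_iSup a)
      (fun i a ha => ?_) (by simpa using zero)
      (fun a a' ha ha' => by simpa only [add_tmul] using add _ _ ha ha')
    exact Submodule.iSup_induction 𝒜 (motive := fun b => P (a ⊗ₜ b)) (mem_iSup b)
      (fun j b hb => tmul ha hb) (by simpa using zero)
      (fun b b' hb hb' => by simpa only [tmul_add] using add _ _ hb hb')

section GradedTensor

variable {A : Type*} [Ring A] [Algebra ℂ A]

variable (𝒜 : ZMod 2 × ZMod 2 → Submodule ℂ A) in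
def IsGradedMul (gmul : A ⊗[ℂ] A →ₗ[ℂ] A ⊗[ℂ] A →ₗ[ℂ] A ⊗[ℂ] A) : Prop :=
  ∀ {γ δ : ZMod 2 × ZMod 2} {b c : A}, b ∈ 𝒜 γ → c ∈ 𝒜 δ → ∀ a d : A,
    gmul (a ⊗ₜ b) (c ⊗ₜ d) = gsign γ δ • ((a * c) ⊗ₜ (b * d))

-- A synonym, because `A ⊗[ℂ] A` already carries the untwisted product.
variable (A) in
def GradedTensor : Type _ := A ⊗[ℂ] A

instance : AddCommGroup (GradedTensor A) := inferInstanceAs (AddCommGroup (A ⊗[ℂ] A))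
noncomputable instance : Module ℂ (GradedTensor A) := inferInstanceAs (Module ℂ (A ⊗[ℂ] A))

namespace IsGradedMul

variable {𝒜 : ZMod 2 × ZMod 2 → Submodule ℂ A} {gmul : A ⊗[ℂ] A →ₗ[ℂ] A ⊗[ℂ] A →ₗ[ℂ] A ⊗[ℂ] A}
  (hgmul : IsGradedMul 𝒜 gmul)
include hgmul

theorem grouplike_primitive_comm {x b : A} {β : ZMod 2 × ZMod 2} (hx : x ∈ 𝒜 0) (hb : b ∈ 𝒜 β)
    {t : ℂ} (hxb : x * b = t • (b * x)) :
    gmul (x ⊗ₜ x) (x ⊗ₜ b + b ⊗ₜ x) = t • gmul (x ⊗ₜ b + b ⊗ₜ x) (x ⊗ₜ x) := by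
  simp only [map_add, LinearMap.add_apply, hgmul hx hx, hgmul hx hb, hgmul hb hx,
    gsign_zero_left, gsign_zero_right, one_smul, hxb, tmul_smul, ← smul_tmul', smul_add]

theorem primitive_comm {x a b : A} {α β : ZMod 2 × ZMod 2} (hx : x ∈ 𝒜 0) (ha : a ∈ 𝒜 α)
    (hb : b ∈ 𝒜 β) {s t c : ℂ} (hxa : x * a = s • (a * x)) (hxb : x * b = t • (b * x))
    (hab : a * b = c • (b * a)) (hstc : t = c * gsign α β * s) :
    gmul (x ⊗ₜ a + a ⊗ₜ x) (x ⊗ₜ b + b ⊗ₜ x) = c • gmul (x ⊗ₜ b + b ⊗ₜ x) (x ⊗ₜ a + a ⊗ₜ x) := by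
  simp only [map_add, LinearMap.add_apply, hgmul hx hx, hgmul hx ha, hgmul hx hb, hgmul ha hx,
    hgmul hb hx, hgmul ha hb, hgmul hb ha, gsign_zero_left, gsign_zero_right, one_smul, hxa, hxb,
    hab, tmul_smul, ← smul_tmul', gsign_comm β α]
  subst hstc
  have := gsign_mul_self α β
  match_scalars <;> grind

theorem primitive_mul_self_eq_zero {x a : A} {α : ZMod 2 × ZMod 2} (hx : x ∈ 𝒜 0) (ha : a ∈ 𝒜 α)
    {s : ℂ} (hxa : x * a = s • (a * x)) (haa : a * a = 0) (hα : gsign α α = -1) :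
    gmul (x ⊗ₜ a + a ⊗ₜ x) (x ⊗ₜ a + a ⊗ₜ x) = 0 := by
  have h := hgmul.primitive_comm hx ha ha hxa hxa (c := -1) (by rw [haa, smul_zero])
    (by rw [hα]; ring)
  rw [neg_one_smul] at h
  have h2 : (2 : ℂ) • gmul (x ⊗ₜ a + a ⊗ₜ x) (x ⊗ₜ a + a ⊗ₜ x) = 0 := by
    rw [two_smul]; nth_rewrite 2 [h]; exact add_neg_cancel _
  exact (smul_eq_zero.mp h2).resolve_left two_ne_zero

variable [SetLike.GradedMonoid 𝒜] (h𝒜 : ⨆ γ, 𝒜 γ = ⊤)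
include h𝒜

theorem one_mul (t : A ⊗[ℂ] A) : gmul (1 ⊗ₜ 1) t = t := by
  induction t using TensorProduct.induction_on_homogeneous h𝒜 with
  | zero => exact map_zero _
  | add t u ht hu => rw [map_add, ht, hu]
  | tmul ha hb => rw [hgmul SetLike.GradedOne.one_mem ha, gsign_zero_left, one_smul, _root_.one_mul,
      _root_.one_mul]

theorem mul_one (t : A ⊗[ℂ] A) : gmul t (1 ⊗ₜ 1) = t := by
  induction t using TensorProduct.induction_on_homogeneous h𝒜 with
  | zero => rw [map_zero, LinearMap.zero_apply]
  | add t u ht hu => rw [map_add, LinearMap.add_apply, ht, hu]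
  | tmul ha hb => rw [hgmul hb SetLike.GradedOne.one_mem, gsign_zero_right, one_smul,
      _root_.mul_one, _root_.mul_one]

theorem mul_assoc (t u v : A ⊗[ℂ] A) : gmul (gmul t u) v = gmul t (gmul u v) := by
  induction t using TensorProduct.induction_on_homogeneous h𝒜 with
  | zero => simp only [map_zero, LinearMap.zero_apply]
  | add t t' ht ht' => simp only [map_add, LinearMap.add_apply, ht, ht']
  | @tmul _ β a b _ hb =>
  induction u using TensorProduct.induction_on_homogeneous h𝒜 with
  | zero => simp only [map_zero, LinearMap.zero_apply]
  | add u u' hu hu' => simp only [map_add, LinearMap.add_apply, hu, hu']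
  | @tmul γ δ c d hc hd =>
  induction v using TensorProduct.induction_on_homogeneous h𝒜 with
  | zero => simp only [map_zero]
  | add v v' hv hv' => simp only [map_add, hv, hv']
  | @tmul ε _ e f he _ =>
    rw [hgmul hb hc, hgmul hd he, map_smul, LinearMap.smul_apply, map_smul,
      hgmul (SetLike.GradedMul.mul_mem hb hd) he, hgmul hb (SetLike.GradedMul.mul_mem hc he),
      smul_smul, smul_smul, gsign_add_left, gsign_add_right, _root_.mul_assoc a, _root_.mul_assoc b]
    congr 1
    ring

protected noncomputable abbrev ring : Ring (GradedTensor A) where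
  mul t u := gmul t u
  one := (1 : A) ⊗ₜ (1 : A)
  mul_assoc := hgmul.mul_assoc h𝒜
  one_mul := hgmul.one_mul h𝒜
  mul_one := hgmul.mul_one h𝒜
  left_distrib t := map_add (gmul t)
  right_distrib := LinearMap.map_add₂ gmul
  zero_mul := LinearMap.map_zero₂ gmul
  mul_zero t := map_zero (gmul t)

protected noncomputable abbrev algebra : letI := hgmul.ring h𝒜; Algebra ℂ (GradedTensor A) :=
  let _ := hgmul.ring h𝒜
  Algebra.ofModule (LinearMap.map_smul₂ gmul) (fun r t => map_smul (gmul t) r)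

end IsGradedMul

end GradedTensor

theorem _root_.SetLike.GradedMonoid.iSup_mul_iSup_le {ι R A : Type*} [AddMonoid ι] [CommSemiring R]
    [Semiring A] [Algebra R A] (𝒜 : ι → Submodule R A) [SetLike.GradedMonoid 𝒜] :
    (⨆ i, 𝒜 i) * (⨆ i, 𝒜 i) ≤ ⨆ i, 𝒜 i := by
  rw [Submodule.iSup_mul]
  refine iSup_le fun i => ?_
  rw [Submodule.mul_iSup]
  exact iSup_le fun j => Submodule.mul_le.mpr fun a ha b hb =>
    le_iSup 𝒜 (i + j) (SetLike.GradedMul.mul_mem ha hb)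

variable (q : ℂ)

instance : SetLike.GradedMonoid (grading q) where
  one_mem := Submodule.subset_span ⟨[], rfl, rfl⟩
  mul_mem γ δ a b ha hb := by
    have hab : a * b ∈ grading q γ * grading q δ := Submodule.mul_mem_mul ha hb
    rw [grading, grading, Submodule.span_mul_span] at hab
    refine Submodule.span_le.mpr ?_ hab
    rintro _ ⟨_, ⟨v, hv, rfl⟩, _, ⟨w, hw, rfl⟩, rfl⟩
    exact Submodule.subset_span ⟨v ++ w, by simp [hv, hw], by simp⟩

lemma gen_mem_grading (i : Fin 4) : gen q i ∈ grading q (dg i) :=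
  Submodule.subset_span ⟨[i], by simp, by simp⟩

lemma iSup_grading_eq_top : ⨆ γ, grading q γ = ⊤ := by
  refine Submodule.eq_top_iff'.mpr fun a => ?_
  obtain ⟨f, rfl⟩ := RingQuot.mkAlgHom_surjective ℂ (Rel q) a
  induction f using FreeAlgebra.induction with
  | grade0 r =>
    rw [AlgHom.commutes, Algebra.algebraMap_eq_smul_one]
    exact Submodule.smul_mem _ r (Submodule.mem_iSup_of_mem 0 SetLike.GradedOne.one_mem)
  | grade1 i => exact Submodule.mem_iSup_of_mem (dg i) (gen_mem_grading q i)
  | mul f g hf hg =>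
    rw [map_mul]
    exact SetLike.GradedMonoid.iSup_mul_iSup_le _ (Submodule.mul_mem_mul hf hg)
  | add f g hf hg => rw [map_add]; exact add_mem hf hg

lemma X_mem_grading : X q ∈ grading q (0, 0) := gen_mem_grading q 0
lemma Xi_mem_grading : Xi q ∈ grading q (0, 1) := gen_mem_grading q 1
lemma Th_mem_grading : Th q ∈ grading q (1, 0) := gen_mem_grading q 2
lemma Zg_mem_grading : Zg q ∈ grading q (1, 1) := gen_mem_grading q 3

lemma X_mul_Xi : X q * Xi q = q • (Xi q * X q) := by
  simpa only [X, Xi, gen, map_mul, map_smul] using RingQuot.mkAlgHom_rel ℂ (Rel.x_xi (q := q))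
lemma X_mul_Th : X q * Th q = q • (Th q * X q) := by
  simpa only [X, Th, gen, map_mul, map_smul] using RingQuot.mkAlgHom_rel ℂ (Rel.x_th (q := q))
lemma X_mul_Zg : X q * Zg q = Zg q * X q := by
  simpa only [X, Zg, gen, map_mul] using RingQuot.mkAlgHom_rel ℂ (Rel.x_z (q := q))
lemma Xi_mul_Xi : Xi q * Xi q = 0 := by
  simpa only [Xi, gen, map_mul, map_zero] using RingQuot.mkAlgHom_rel ℂ (Rel.xi_sq (q := q))
lemma Th_mul_Th : Th q * Th q = 0 := by
  simpa only [Th, gen, map_mul, map_zero] using RingQuot.mkAlgHom_rel ℂ (Rel.th_sq (q := q))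
lemma Xi_mul_Th : Xi q * Th q = Th q * Xi q := by
  simpa only [Xi, Th, gen, map_mul] using RingQuot.mkAlgHom_rel ℂ (Rel.xi_th (q := q))
lemma Xi_mul_Zg : Xi q * Zg q = (-q⁻¹) • (Zg q * Xi q) := by
  simpa only [Xi, Zg, gen, map_mul, map_smul] using RingQuot.mkAlgHom_rel ℂ (Rel.xi_z (q := q))
lemma Th_mul_Zg : Th q * Zg q = (-q⁻¹) • (Zg q * Th q) := by
  simpa only [Th, Zg, gen, map_mul, map_smul] using RingQuot.mkAlgHom_rel ℂ (Rel.th_z (q := q))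

theorem exists_linearMap_map_mul_gmul
    {gmul : Aq q ⊗[ℂ] Aq q →ₗ[ℂ] Aq q ⊗[ℂ] Aq q →ₗ[ℂ] Aq q ⊗[ℂ] Aq q}
    (hgmul : IsGradedMul (grading q) gmul) {x ξ θ z : Aq q ⊗[ℂ] Aq q}
    (h_x_xi : gmul x ξ = q • gmul ξ x) (h_x_th : gmul x θ = q • gmul θ x)
    (h_x_z : gmul x z = gmul z x) (h_xi_sq : gmul ξ ξ = 0) (h_th_sq : gmul θ θ = 0)
    (h_xi_th : gmul ξ θ = gmul θ ξ) (h_xi_z : gmul ξ z = (-q⁻¹) • gmul z ξ)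
    (h_th_z : gmul θ z = (-q⁻¹) • gmul z θ) :
    ∃ D : Aq q →ₗ[ℂ] Aq q ⊗[ℂ] Aq q,
      D 1 = 1 ⊗ₜ 1 ∧ (∀ a b : Aq q, D (a * b) = gmul (D a) (D b)) ∧
      D (X q) = x ∧ D (Xi q) = ξ ∧ D (Th q) = θ ∧ D (Zg q) = z := by
  let _ := hgmul.ring (iSup_grading_eq_top q)
  let _ := hgmul.algebra (iSup_grading_eq_top q)
  let φ : FreeAlgebra ℂ (Fin 4) →ₐ[ℂ] GradedTensor (Aq q) := FreeAlgebra.lift ℂ ![x, ξ, θ, z]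
  have hφ : ∀ ⦃a b⦄, Rel q a b → φ a = φ b := by
    rintro _ _ (_ | _ | _ | _ | _ | _ | _ | _) <;>
      simp only [φ, map_mul, map_smul, map_zero, FreeAlgebra.lift_ι_apply] <;>
      assumption
  let Δ := RingQuot.liftAlgHom ℂ ⟨φ, hφ⟩
  have hΔ (i : Fin 4) : Δ (gen q i) = ![x, ξ, θ, z] i :=
    (RingQuot.liftAlgHom_mkAlgHom_apply ℂ φ hφ _).trans (FreeAlgebra.lift_ι_apply _ _)
  exact ⟨Δ.toLinearMap, map_one Δ, map_mul Δ, hΔ 0, hΔ 1, hΔ 2, hΔ 3⟩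

end DGQS

open DGQS in
theorem statement5_general (q : ℂ) (hq : q ≠ 0)
    (gmul : (Aq q ⊗[ℂ] Aq q) →ₗ[ℂ] (Aq q ⊗[ℂ] Aq q) →ₗ[ℂ] (Aq q ⊗[ℂ] Aq q))
    (hgmul : ∀ {γ δ : ZMod 2 × ZMod 2} {b c : Aq q},
      b ∈ grading q γ → c ∈ grading q δ → ∀ a d : Aq q,
        gmul (a ⊗ₜ[ℂ] b) (c ⊗ₜ[ℂ] d) = gsign γ δ • ((a * c) ⊗ₜ[ℂ] (b * d))) :
    gmul (X q ⊗ₜ[ℂ] Xi q + Xi q ⊗ₜ[ℂ] X q) (X q ⊗ₜ[ℂ] Zg q + Zg q ⊗ₜ[ℂ] X q)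
        = (-q⁻¹) • gmul (X q ⊗ₜ[ℂ] Zg q + Zg q ⊗ₜ[ℂ] X q)
            (X q ⊗ₜ[ℂ] Xi q + Xi q ⊗ₜ[ℂ] X q) ∧
    gmul (X q ⊗ₜ[ℂ] Th q + Th q ⊗ₜ[ℂ] X q) (X q ⊗ₜ[ℂ] Zg q + Zg q ⊗ₜ[ℂ] X q)
        = (-q⁻¹) • gmul (X q ⊗ₜ[ℂ] Zg q + Zg q ⊗ₜ[ℂ] X q)
            (X q ⊗ₜ[ℂ] Th q + Th q ⊗ₜ[ℂ] X q) ∧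
    ∃ D : Aq q →ₗ[ℂ] Aq q ⊗[ℂ] Aq q,
      D 1 = 1 ⊗ₜ[ℂ] 1 ∧
      (∀ a b : Aq q, D (a * b) = gmul (D a) (D b)) ∧
      D (X q) = X q ⊗ₜ[ℂ] X q ∧
      D (Xi q) = X q ⊗ₜ[ℂ] Xi q + Xi q ⊗ₜ[ℂ] X q ∧
      D (Th q) = X q ⊗ₜ[ℂ] Th q + Th q ⊗ₜ[ℂ] X q ∧
      D (Zg q) = X q ⊗ₜ[ℂ] Zg q + Zg q ⊗ₜ[ℂ] X q := by
  have hmul : IsGradedMul (grading q) gmul := hgmul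
  have hx := X_mem_grading q
  have hxi := Xi_mem_grading q
  have hth := Th_mem_grading q
  have hz := Zg_mem_grading q
  have hxz : X q * Zg q = (1 : ℂ) • (Zg q * X q) := by rw [one_smul, X_mul_Zg]
  have hΞZ := hmul.primitive_comm hx hxi hz (X_mul_Xi q) hxz (Xi_mul_Zg q)
    (by rw [gsign_eq_neg_one (by decide)]; field_simp)
  have hΘZ := hmul.primitive_comm hx hth hz (X_mul_Th q) hxz (Th_mul_Zg q)
    (by rw [gsign_eq_neg_one (by decide)]; field_simp)
  have hΞΘ := hmul.primitive_comm hx hxi hth (X_mul_Xi q) (X_mul_Th q) (c := 1)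
    (by rw [one_smul, Xi_mul_Th]) (by rw [gsign_eq_one (by decide)]; ring)
  rw [one_smul] at hΞΘ
  refine ⟨hΞZ, hΘZ, exists_linearMap_map_mul_gmul q hmul
    (hmul.grouplike_primitive_comm hx hxi (X_mul_Xi q))
    (hmul.grouplike_primitive_comm hx hth (X_mul_Th q))
    (by simpa only [one_smul] using hmul.grouplike_primitive_comm hx hz hxz)
    (hmul.primitive_mul_self_eq_zero hx hxi (X_mul_Xi q) (Xi_mul_Xi q)
      (gsign_eq_neg_one (by decide)))
    (hmul.primitive_mul_self_eq_zero hx hth (X_mul_Th q) (Th_mul_Th q)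
      (gsign_eq_neg_one (by decide)))
    hΞΘ hΞZ hΘZ⟩

open DGQS in
theorem statement5 (q : ℂ) (hq : q ≠ 0) (hqroot : ∀ n : ℕ, 0 < n → q ^ n ≠ 1)
    (gmul : (Aq q ⊗[ℂ] Aq q) →ₗ[ℂ] (Aq q ⊗[ℂ] Aq q) →ₗ[ℂ] (Aq q ⊗[ℂ] Aq q))
    (hgmul : ∀ {γ δ : ZMod 2 × ZMod 2} {b c : Aq q},
      b ∈ grading q γ → c ∈ grading q δ → ∀ a d : Aq q,
        gmul (a ⊗ₜ[ℂ] b) (c ⊗ₜ[ℂ] d) = gsign γ δ • ((a * c) ⊗ₜ[ℂ] (b * d))) :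
    gmul (X q ⊗ₜ[ℂ] Xi q + Xi q ⊗ₜ[ℂ] X q) (X q ⊗ₜ[ℂ] Zg q + Zg q ⊗ₜ[ℂ] X q)
        = (-q⁻¹) • gmul (X q ⊗ₜ[ℂ] Zg q + Zg q ⊗ₜ[ℂ] X q)
            (X q ⊗ₜ[ℂ] Xi q + Xi q ⊗ₜ[ℂ] X q) ∧
    gmul (X q ⊗ₜ[ℂ] Th q + Th q ⊗ₜ[ℂ] X q) (X q ⊗ₜ[ℂ] Zg q + Zg q ⊗ₜ[ℂ] X q)
        = (-q⁻¹) • gmul (X q ⊗ₜ[ℂ] Zg q + Zg q ⊗ₜ[ℂ] X q)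
            (X q ⊗ₜ[ℂ] Th q + Th q ⊗ₜ[ℂ] X q) ∧
    ∃ D : Aq q →ₗ[ℂ] Aq q ⊗[ℂ] Aq q,
      D 1 = 1 ⊗ₜ[ℂ] 1 ∧
      (∀ a b : Aq q, D (a * b) = gmul (D a) (D b)) ∧
      D (X q) = X q ⊗ₜ[ℂ] X q ∧
      D (Xi q) = X q ⊗ₜ[ℂ] Xi q + Xi q ⊗ₜ[ℂ] X q ∧
      D (Th q) = X q ⊗ₜ[ℂ] Th q + Th q ⊗ₜ[ℂ] X q ∧
      D (Zg q) = X q ⊗ₜ[ℂ] Zg q + Zg q ⊗ₜ[ℂ] X q :=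
  statement5_general q hq gmul hgmul
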